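/- Let O ⊂ ℝ^d be a nonempty bounded open set, T > 0, α ∈ (0,1] and s ≥ 1 with α·s ≥ d. Let u : [0,T] × cl(O) → ℝ satisfy: |u(t,x)| ≤ 1 for all (t,x); u(t,x) = 0 whenever x ∈ ∂O; there is a constant C such that for every t ∈ [0,T] the function u(t,·) is α-Hölder on cl(O) with constant C; for every x ∈ cl(O) the map t ↦ u(t,x) is continuous on [0,T]; and there is K < ∞ with ∫_O (1 − u(t,x)²)^{−s} dx ≤ K for every t ∈ [0,T]. Then there exists δ ∈ (0,1) such that sup_{(t,x) ∈ [0,T] × cl(O)} |u(t,x)| ≤ 1 − δ. -/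

import Mathlib

open MeasureTheory Metric Filter Set Topology Module

/-!
Uniform Hölder continuity in space together with continuity in time makes `u` jointly
continuous on the compact set `[0,T] × cl(O)`, so it suffices to rule out `|u(t₀,x₀)| = 1`.
On `∂O` the function vanishes. At a point `x₀ ∈ O` we get `1 - u(t₀,x)² ≤ 2C‖x - x₀‖^α`,
so the integrand `(1 - u²)^{-s}` dominates a multiple of `‖x - x₀‖^{-αs}`, which is not
integrable near `x₀` because `αs ≥ d`.
-/

theorem continuousOn_uncurry_of_holder {X Y : Type*} [TopologicalSpace X] [PseudoMetricSpace Y]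
    {u : X → Y → ℝ} {S : Set X} {A : Set Y} {C α : ℝ} (hα : 0 < α)
    (hu : ∀ t ∈ S, ∀ x ∈ A, ∀ y ∈ A, |u t x - u t y| ≤ C * dist x y ^ α)
    (hcont : ∀ x ∈ A, ContinuousOn (fun t => u t x) S) :
    ContinuousOn (Function.uncurry u) (S ×ˢ A) := by
  rintro ⟨t₀, x₀⟩ ⟨ht₀ : t₀ ∈ S, hx₀ : x₀ ∈ A⟩
  have hspace : Tendsto (fun p : X × Y => C * dist p.2 x₀ ^ α) (𝓝[S ×ˢ A] (t₀, x₀)) (𝓝 0) := by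
    have hc : Continuous (fun p : X × Y => C * dist p.2 x₀ ^ α) :=
      continuous_const.mul ((continuous_snd.dist continuous_const).rpow_const
        fun _ => Or.inr hα.le)
    exact (hc.tendsto' _ _ (by simp [Real.zero_rpow hα.ne'])).mono_left nhdsWithin_le_nhds
  have htime := (hcont x₀ hx₀ t₀ ht₀).comp (x := (t₀, x₀)) continuousWithinAt_fst
    (mapsTo_fst_prod (t := A))
  refine tendsto_iff_dist_tendsto_zero.2 <| squeeze_zero' (.of_forall fun _ => dist_nonneg)
    (eventually_mem_nhdsWithin.mono fun p hp => ?_)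
    (by simpa using hspace.add (tendsto_iff_dist_tendsto_zero.1 htime))
  calc dist (u p.1 p.2) (u t₀ x₀) ≤ dist (u p.1 p.2) (u p.1 x₀) + dist (u p.1 x₀) (u t₀ x₀) :=
        dist_triangle _ _ _
    _ ≤ C * dist p.2 x₀ ^ α + dist (u p.1 x₀) (u t₀ x₀) := by
        rw [Real.dist_eq]; gcongr; exact hu p.1 hp.1 p.2 hp.2 x₀ hx₀

theorem IsCompact.exists_abs_le_one_sub {X : Type*} [TopologicalSpace X] {K : Set X} {f : X → ℝ}
    (hK : IsCompact K) (hf : ContinuousOn f K) (hlt : ∀ x ∈ K, |f x| < 1) :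
    ∃ δ ∈ Ioo (0 : ℝ) 1, ∀ x ∈ K, |f x| ≤ 1 - δ := by
  obtain ⟨ε, hε, hεle⟩ := hK.exists_forall_le' (f := fun x => 1 - |f x|)
    (continuousOn_const.sub hf.abs) fun x hx => sub_pos.2 (hlt x hx)
  refine ⟨min ε (1 / 2), ⟨by positivity, by linarith [min_le_right ε (1 / 2)]⟩, fun x hx => ?_⟩
  linarith [hεle x hx, min_le_left ε (1 / 2)]

theorem one_sub_sq_le_two_mul_abs_sub {a b : ℝ} (ha : |a| = 1) : 1 - b ^ 2 ≤ 2 * |b - a| := by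
  have hb : 1 - |b| ≤ |b - a| := by
    simpa [ha] using abs_sub_abs_le_abs_sub a b |>.trans_eq (abs_sub_comm a b)
  nlinarith [sq_abs b, sq_nonneg (1 - |b|)]

section
variable {E : Type*} [NormedAddCommGroup E] [NormedSpace ℝ E] [FiniteDimensional ℝ E]
  [MeasurableSpace E] [BorelSpace E] (μ : Measure E) [μ.IsAddHaarMeasure]

theorem not_integrableOn_ball_norm_rpow_neg [Nontrivial E] {p r : ℝ} (hp : (finrank ℝ E : ℝ) ≤ p)
    (hr : 0 < r) : ¬ IntegrableOn (fun x : E => ‖x‖ ^ (-p)) (ball 0 r) μ := by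
  rw [integrableOn_fun_norm_addHaar μ (f := fun y => y ^ (-p))]
  intro h
  have hpow : IntegrableOn (fun y : ℝ => y ^ ((finrank ℝ E : ℝ) - 1 - p)) (Ioo 0 r) := by
    refine h.congr_fun (fun y hy => ?_) measurableSet_Ioo
    have hd : 1 ≤ finrank ℝ E := finrank_pos
    change y ^ (finrank ℝ E - 1) * y ^ (-p) = _
    rw [← Real.rpow_natCast, ← Real.rpow_add hy.1, Nat.cast_sub hd]
    ring_nf
  rw [intervalIntegral.integrableOn_Ioo_rpow_iff hr] at hpow
  linarith

theorem lintegral_ball_enorm_sub_rpow_neg_eq_top (x₀ : E) {p r : ℝ} (hp₀ : 0 < p)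
    (hp : (finrank ℝ E : ℝ) ≤ p) (hr : 0 < r) :
    ∫⁻ x in ball x₀ r, ‖x - x₀‖ₑ ^ (-p) ∂μ = ⊤ := by
  rcases subsingleton_or_nontrivial E with hE | hE
  · have htop : ∀ x : E, ‖x - x₀‖ₑ ^ (-p) = ⊤ := fun x => by
      simp [Subsingleton.elim x x₀, hp₀]
    simp [htop, (measure_ball_pos μ x₀ hr).ne']
  have hball : ball x₀ r = (· - x₀) ⁻¹' ball 0 r := by
    ext x; simp [dist_eq_norm]
  rw [hball, (measurePreserving_sub_right μ x₀).setLIntegral_comp_preimage_emb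
    (measurableEmbedding_subRight x₀) (fun y => ‖y‖ₑ ^ (-p))]
  -- The two integrands differ only at `0`, where `‖0‖ₑ ^ (-p) = ⊤` but `‖0‖ ^ (-p) = 0`.
  have hae : (fun y : E => ‖y‖ₑ ^ (-p)) =ᵐ[μ.restrict (ball 0 r)]
      fun y => ENNReal.ofReal (‖y‖ ^ (-p)) := by
    filter_upwards [ae_restrict_of_ae (compl_mem_ae_iff.2 (measure_singleton (μ := μ) 0))]
      with y hy
    rw [← ENNReal.ofReal_rpow_of_pos (norm_pos_iff.2 hy), ofReal_norm]
  rw [lintegral_congr_ae hae]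
  by_contra hfin
  have hmeas : Measurable fun y : E => ‖y‖ ^ (-p) := continuous_norm.measurable.pow_const _
  exact not_integrableOn_ball_norm_rpow_neg μ hp hr <|
    (lintegral_ofReal_ne_top_iff_integrable hmeas.aestronglyMeasurable
      (.of_forall fun y => by positivity)).1 hfin

theorem lintegral_ofReal_one_sub_sq_rpow_neg_eq_top {v : E → ℝ} {O : Set E} {x₀ : E}
    {C α s : ℝ} (hO : IsOpen O) (hx₀ : x₀ ∈ O) (hv₀ : |v x₀| = 1) (hα : 0 < α) (hs : 0 < s)
    (hαs : (finrank ℝ E : ℝ) ≤ α * s) (hv : ∀ x ∈ O, |v x - v x₀| ≤ C * ‖x - x₀‖ ^ α) :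
    ∫⁻ x in O, ENNReal.ofReal (1 - v x ^ 2) ^ (-s) ∂μ = ⊤ := by
  obtain ⟨r, hr, hball⟩ := Metric.isOpen_iff.1 hO x₀ hx₀
  set c : ENNReal := ENNReal.ofReal (2 * max C 0) ^ (-s)
  have hc : c ≠ 0 := by simp [c, ENNReal.rpow_eq_zero_iff, ENNReal.mul_eq_top, hs.le]
  have hpt : ∀ x ∈ ball x₀ r,
      c * ‖x - x₀‖ₑ ^ (-(α * s)) ≤ ENNReal.ofReal (1 - v x ^ 2) ^ (-s) := by
    intro x hx
    have hreal : 1 - v x ^ 2 ≤ 2 * max C 0 * ‖x - x₀‖ ^ α := by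
      have hC : C * ‖x - x₀‖ ^ α ≤ max C 0 * ‖x - x₀‖ ^ α := by gcongr; exact le_max_left C 0
      linarith [one_sub_sq_le_two_mul_abs_sub (b := v x) hv₀, hv x (hball hx)]
    have henn : ENNReal.ofReal (1 - v x ^ 2) ≤ ENNReal.ofReal (2 * max C 0) * ‖x - x₀‖ₑ ^ α := by
      rw [← ofReal_norm, ENNReal.ofReal_rpow_of_nonneg (norm_nonneg _) hα.le,
        ← ENNReal.ofReal_mul (by positivity)]
      exact ENNReal.ofReal_le_ofReal hreal
    calc c * ‖x - x₀‖ₑ ^ (-(α * s))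
        = (ENNReal.ofReal (2 * max C 0) * ‖x - x₀‖ₑ ^ α) ^ (-s) := by
          rw [ENNReal.mul_rpow_of_ne_top ENNReal.ofReal_ne_top (by simp [hα.le]),
            ← ENNReal.rpow_mul, neg_mul_eq_mul_neg]
      _ ≤ ENNReal.ofReal (1 - v x ^ 2) ^ (-s) := by
          rw [ENNReal.rpow_neg, ENNReal.rpow_neg]
          exact ENNReal.inv_le_inv.2 (ENNReal.rpow_le_rpow henn hs.le)
  refine top_le_iff.1 ?_
  calc ⊤ = c * ∫⁻ x in ball x₀ r, ‖x - x₀‖ₑ ^ (-(α * s)) ∂μ := by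
        rw [lintegral_ball_enorm_sub_rpow_neg_eq_top μ x₀ (by positivity) hαs hr,
          ENNReal.mul_top hc]
    _ ≤ ∫⁻ x in ball x₀ r, c * ‖x - x₀‖ₑ ^ (-(α * s)) ∂μ := lintegral_const_mul_le _ _
    _ ≤ ∫⁻ x in ball x₀ r, ENNReal.ofReal (1 - v x ^ 2) ^ (-s) ∂μ :=
        setLIntegral_mono' measurableSet_ball hpt
    _ ≤ ∫⁻ x in O, ENNReal.ofReal (1 - v x ^ 2) ^ (-s) ∂μ := lintegral_mono_set hball

end

theorem stmt_18_general (d : ℕ) (O : Set (EuclideanSpace ℝ (Fin d)))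
    (hO : IsOpen O) (hObd : Bornology.IsBounded O)
    (T : ℝ)
    (α s : ℝ) (hα : α ∈ Set.Ioc (0 : ℝ) 1) (hs : 1 ≤ s) (hαs : (d : ℝ) ≤ α * s)
    (u : ℝ → EuclideanSpace ℝ (Fin d) → ℝ)
    (hub : ∀ t ∈ Set.Icc (0 : ℝ) T, ∀ x ∈ closure O, |u t x| ≤ 1)
    (hbdry : ∀ t ∈ Set.Icc (0 : ℝ) T, ∀ x ∈ frontier O, u t x = 0)
    (C : ℝ)
    (hHolder : ∀ t ∈ Set.Icc (0 : ℝ) T, ∀ x ∈ closure O, ∀ y ∈ closure O,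
      |u t x - u t y| ≤ C * ‖x - y‖ ^ α)
    (hcont : ∀ x ∈ closure O, ContinuousOn (fun t => u t x) (Set.Icc (0 : ℝ) T))
    (K : ℝ)
    (hint : ∀ t ∈ Set.Icc (0 : ℝ) T,
      ∫⁻ x in O, (ENNReal.ofReal (1 - u t x ^ 2)) ^ (-s) ≤ ENNReal.ofReal K) :
    ∃ δ ∈ Set.Ioo (0 : ℝ) 1,
      ∀ t ∈ Set.Icc (0 : ℝ) T, ∀ x ∈ closure O, |u t x| ≤ 1 - δ := by
  have hjoint : ContinuousOn (Function.uncurry u) (Icc 0 T ×ˢ closure O) :=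
    continuousOn_uncurry_of_holder hα.1 (by simpa only [dist_eq_norm] using hHolder) hcont
  have hlt : ∀ p ∈ Icc 0 T ×ˢ closure O, |Function.uncurry u p| < 1 := by
    rintro ⟨t, x⟩ ⟨ht, hx⟩
    refine (hub t ht x hx).lt_of_ne fun hone => ?_
    rcases (closure_eq_self_union_frontier O ▸ hx : x ∈ O ∪ frontier O) with hxO | hxF
    · have htop := lintegral_ofReal_one_sub_sq_rpow_neg_eq_top volume (s := s) hO hxO hone hα.1
        (by linarith) (by rwa [finrank_euclideanSpace_fin])
        fun y hy => hHolder t ht y (subset_closure hy) x hx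
      exact ENNReal.ofReal_ne_top (top_le_iff.1 (htop ▸ hint t ht))
    · simp [hbdry t ht x hxF] at hone
  obtain ⟨δ, hδ, hle⟩ :=
    (isCompact_Icc.prod hObd.isCompact_closure).exists_abs_le_one_sub hjoint hlt
  exact ⟨δ, hδ, fun t ht x hx => hle (t, x) ⟨ht, hx⟩⟩

/-- Deterministic core of the random separation property: let `O ⊂ ℝ^d` be a nonempty
bounded open set, `T > 0`, `α ∈ (0,1]`, `s ≥ 1` with `α s ≥ d`, and
`u : [0,T] × cl(O) → ℝ` with `|u| ≤ 1`, vanishing on `∂O`, uniformly `α`-Hölder in space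
with constant `C`, continuous in time for each fixed `x ∈ cl(O)`, and with
`∫_O (1 - u(t,·)²)^{-s} ≤ K < ∞` for every `t ∈ [0,T]`. Then there exists `δ ∈ (0,1)`
such that `|u(t,x)| ≤ 1 - δ` on all of `[0,T] × cl(O)`. -/
theorem stmt_18 (d : ℕ) (O : Set (EuclideanSpace ℝ (Fin d)))
    (hO : IsOpen O) (hObd : Bornology.IsBounded O) (hne : O.Nonempty)
    (T : ℝ) (hT : 0 < T)
    (α s : ℝ) (hα : α ∈ Set.Ioc (0 : ℝ) 1) (hs : 1 ≤ s) (hαs : (d : ℝ) ≤ α * s)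
    (u : ℝ → EuclideanSpace ℝ (Fin d) → ℝ)
    (hub : ∀ t ∈ Set.Icc (0 : ℝ) T, ∀ x ∈ closure O, |u t x| ≤ 1)
    (hbdry : ∀ t ∈ Set.Icc (0 : ℝ) T, ∀ x ∈ frontier O, u t x = 0)
    (C : ℝ)
    (hHolder : ∀ t ∈ Set.Icc (0 : ℝ) T, ∀ x ∈ closure O, ∀ y ∈ closure O,
      |u t x - u t y| ≤ C * ‖x - y‖ ^ α)
    (hcont : ∀ x ∈ closure O, ContinuousOn (fun t => u t x) (Set.Icc (0 : ℝ) T))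
    (K : ℝ)
    (hint : ∀ t ∈ Set.Icc (0 : ℝ) T,
      ∫⁻ x in O, (ENNReal.ofReal (1 - u t x ^ 2)) ^ (-s) ≤ ENNReal.ofReal K) :
    ∃ δ ∈ Set.Ioo (0 : ℝ) 1,
      ∀ t ∈ Set.Icc (0 : ℝ) T, ∀ x ∈ closure O, |u t x| ≤ 1 - δ :=
  stmt_18_general d O hO hObd T α s hα hs hαs u hub hbdry C hHolder hcont K hint
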